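/- arXiv:1610.02318 — 5 statements merged into one kernel-verified Lean document; each statement's English description precedes it below -/
import Mathlib

section
/- Locality of the conditional Gibbs distribution: for every base station j and every pair of configurations A, B ∈ 𝓑 that agree on all columns other than j, exp(β h(A)) / Σ_v exp(β h(B[j←v])) = exp(β g_j(A)) / Σ_v exp(β g_j(B[j←v])), where the sums run over all columns v ∈ {0,1}^M with Σ_i v_i = K, B[j←v] denotes B with its j-th column replaced by v, and g_j(A) := Σ_{n ∈ Ψ(j)} Σ_{s ⊆ {1,…,N}, j ∈ s} h_n(A,s). That is, the conditional Gibbs probability of BS j's cache given all other caches depends only on the caches of the neighbours Ψ(j). -/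
open Finset Filter

noncomputable section

/-- The configuration space: M×N 0-1 matrices (Bool-valued) whose every column sums to K. -/
def Config (M N K : ℕ) : Finset (Fin M → Fin N → Bool) :=
  Finset.univ.filter fun B =>
    ∀ j : Fin N, (Finset.univ.filter fun i : Fin M => B i j = true).card = K

/-- Σ_{j∈s} B(i,j), the number of base stations in `s` caching content `i`. -/
def colCount {M N : ℕ} (B : Fin M → Fin N → Bool) (i : Fin M) (s : Finset (Fin N)) : ℕ :=
  (s.filter fun j => B i j = true).card

/-- The cache hit rate h(B) = Σ_s w(s) Σ_i λ_i 1{Σ_{j∈s} B(i,j) ≥ 1}. -/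
def hitRate {M N : ℕ} (lam : Fin M → ℝ) (w : Finset (Fin N) → ℝ)
    (B : Fin M → Fin N → Bool) : ℝ :=
  ∑ s : Finset (Fin N), w s * ∑ i : Fin M, lam i * (if 1 ≤ colCount B i s then (1 : ℝ) else 0)

/-- Columns v ∈ {0,1}^M with Σ_i v_i = K. -/
def colSet (M K : ℕ) : Finset (Fin M → Bool) :=
  Finset.univ.filter fun v => (Finset.univ.filter fun i : Fin M => v i = true).card = K

/-- x[j←v] : x with its j-th column replaced by v. -/
def updCol {M N : ℕ} (x : Fin M → Fin N → Bool) (j : Fin N) (v : Fin M → Bool) :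
    Fin M → Fin N → Bool :=
  fun i j' => if j' = j then v i else x i j'

open MeasureTheory
open scoped Classical

/-- C(s) = (⋂_{i∈s} C_i) ∩ (⋃_{i∉s} C_i)ᶜ : the region covered exactly by the BSs in s. -/
def cellRegion {N : ℕ} (C : Fin N → Set (ℝ × ℝ)) (s : Finset (Fin N)) : Set (ℝ × ℝ) :=
  (⋂ i ∈ s, C i) ∩ (⋃ i ∈ (sᶜ : Finset (Fin N)), C i)ᶜ

/-- w(s) = Leb(C(s)). -/
def wvol {N : ℕ} (C : Fin N → Set (ℝ × ℝ)) (s : Finset (Fin N)) : ℝ :=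
  (volume (cellRegion C s)).toReal

/-- h_n(A,s) = Σ_i λ_i w(s) A(i,n) 1{n∈s} / max(1, Σ_{k∈s} A(i,k)). -/
def hns {M N : ℕ} (lam : Fin M → ℝ) (w : Finset (Fin N) → ℝ)
    (A : Fin M → Fin N → Bool) (n : Fin N) (s : Finset (Fin N)) : ℝ :=
  ∑ i : Fin M, lam i * w s * (if A i n then (1 : ℝ) else 0) * (if n ∈ s then (1 : ℝ) else 0) /
    max 1 ((colCount A i s : ℝ))

/-- The neighbourhood Ψ(j) = {n : C_j ∩ C_n ≠ ∅} (note j ∈ Ψ(j)). -/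
def Psi {N : ℕ} (C : Fin N → Set (ℝ × ℝ)) (j : Fin N) : Finset (Fin N) :=
  Finset.univ.filter fun n => (C j ∩ C n).Nonempty

/-- The local energy g_j(A) = Σ_{n ∈ Ψ(j)} Σ_{s ∋ j} h_n(A,s). -/
def gloc {M N : ℕ} (lam : Fin M → ℝ) (C : Fin N → Set (ℝ × ℝ)) (j : Fin N)
    (A : Fin M → Fin N → Bool) : ℝ :=
  ∑ n ∈ Psi C j, ∑ s ∈ Finset.univ.filter (fun s : Finset (Fin N) => j ∈ s),
    hns lam (wvol C) A n s

/-!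
Split the hit rate by regions: the regions `C(s)` with `j ∉ s` contribute an amount that ignores
column `j`, hence is the same for `A` and for every `B[j←v]`, and cancels from the Gibbs ratio.
Spreading each region's hits evenly over the stations of `s` that serve them (the shares `h_n`),
the regions with `j ∈ s` contribute exactly `g_j`: a station `n ∉ Ψ(j)` can only share a region
of `C_j ∩ C_n = ∅`, which has measure zero.
-/

lemma natCast_div_max_one_self (c : ℕ) :
    (c : ℝ) / max 1 (c : ℝ) = if 1 ≤ c then 1 else 0 := by
  rcases Nat.eq_zero_or_pos c with rfl | hc
  · simp
  · have hc' : (1 : ℝ) ≤ c := by exact_mod_cast hc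
    rw [max_eq_right hc', div_self (by positivity)]
    exact (if_pos hc).symm

lemma colCount_eq_sum {M N : ℕ} (X : Fin M → Fin N → Bool) (i : Fin M) (s : Finset (Fin N)) :
    (colCount X i s : ℝ) =
      ∑ n : Fin N, (if X i n then (1 : ℝ) else 0) * (if n ∈ s then 1 else 0) := by
  simp only [mul_ite, mul_one, mul_zero, sum_ite_mem, univ_inter, colCount, card_filter]
  push_cast
  rfl

lemma sum_hns {M N : ℕ} (lam : Fin M → ℝ) (w : Finset (Fin N) → ℝ)
    (X : Fin M → Fin N → Bool) (s : Finset (Fin N)) :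
    ∑ n : Fin N, hns lam w X n s =
      w s * ∑ i : Fin M, lam i * (if 1 ≤ colCount X i s then (1 : ℝ) else 0) := by
  simp only [hns, ← natCast_div_max_one_self, mul_sum]
  rw [sum_comm]
  refine sum_congr rfl fun i _ => ?_
  rw [colCount_eq_sum, ← sum_div]
  simp only [mul_assoc, ← mul_sum]
  ring

lemma hitRate_eq_sum_hns {M N : ℕ} (lam : Fin M → ℝ) (w : Finset (Fin N) → ℝ)
    (X : Fin M → Fin N → Bool) :
    hitRate lam w X = ∑ s : Finset (Fin N), ∑ n : Fin N, hns lam w X n s := by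
  simp only [sum_hns, hitRate]

lemma wvol_eq_zero_of_inter_eq_empty {N : ℕ} (C : Fin N → Set (ℝ × ℝ)) {j n : Fin N}
    {s : Finset (Fin N)} (hj : j ∈ s) (hn : n ∈ s) (hjn : C j ∩ C n = ∅) : wvol C s = 0 := by
  have hsub : cellRegion C s ⊆ C j ∩ C n := fun x hx =>
    ⟨Set.mem_iInter₂.mp hx.1 j hj, Set.mem_iInter₂.mp hx.1 n hn⟩
  rw [hjn, Set.subset_empty_iff] at hsub
  simp [wvol, hsub]

lemma hns_eq_zero_of_notMem_Psi {M N : ℕ} (lam : Fin M → ℝ) (C : Fin N → Set (ℝ × ℝ))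
    (X : Fin M → Fin N → Bool) {j n : Fin N} {s : Finset (Fin N)}
    (hj : j ∈ s) (hn : n ∉ Psi C j) : hns lam (wvol C) X n s = 0 := by
  by_cases hns' : n ∈ s
  · have hjn : C j ∩ C n = ∅ := by
      simpa [Psi, Set.not_nonempty_iff_eq_empty] using hn
    simp [hns, wvol_eq_zero_of_inter_eq_empty C hj hns' hjn]
  · simp [hns, hns']

lemma sum_hns_of_mem_eq_gloc {M N : ℕ} (lam : Fin M → ℝ) (C : Fin N → Set (ℝ × ℝ))
    (j : Fin N) (X : Fin M → Fin N → Bool) :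
    ∑ s ∈ univ.filter (fun s : Finset (Fin N) => j ∈ s), ∑ n : Fin N, hns lam (wvol C) X n s =
      gloc lam C j X := by
  rw [gloc, sum_comm]
  refine (sum_subset (subset_univ _) fun n _ hn => ?_).symm
  exact sum_eq_zero fun s hs => hns_eq_zero_of_notMem_Psi lam C X (mem_filter.mp hs).2 hn

lemma hns_congr_of_notMem {M N : ℕ} (lam : Fin M → ℝ) (w : Finset (Fin N) → ℝ)
    {X Y : Fin M → Fin N → Bool} {j n : Fin N} {s : Finset (Fin N)} (hj : j ∉ s)
    (hXY : ∀ (i : Fin M) (j' : Fin N), j' ≠ j → X i j' = Y i j') :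
    hns lam w X n s = hns lam w Y n s := by
  have hne : ∀ {k}, k ∈ s → k ≠ j := fun hk hkj => hj (hkj ▸ hk)
  have hcount : ∀ i, colCount X i s = colCount Y i s := fun i =>
    congrArg card (filter_congr fun k hk => by rw [hXY i k (hne hk)])
  refine sum_congr rfl fun i _ => ?_
  by_cases hn : n ∈ s
  · rw [hcount, hXY i n (hne hn)]
  · simp [hn]

def hitRateAwayFrom {M N : ℕ} (lam : Fin M → ℝ) (w : Finset (Fin N) → ℝ) (j : Fin N)
    (X : Fin M → Fin N → Bool) : ℝ :=
  ∑ s ∈ univ.filter (fun s : Finset (Fin N) => j ∉ s), ∑ n : Fin N, hns lam w X n s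

lemma hitRateAwayFrom_congr {M N : ℕ} (lam : Fin M → ℝ) (w : Finset (Fin N) → ℝ) (j : Fin N)
    {X Y : Fin M → Fin N → Bool} (hXY : ∀ (i : Fin M) (j' : Fin N), j' ≠ j → X i j' = Y i j') :
    hitRateAwayFrom lam w j X = hitRateAwayFrom lam w j Y :=
  sum_congr rfl fun _ hs => sum_congr rfl fun _ _ =>
    hns_congr_of_notMem lam w (mem_filter.mp hs).2 hXY

lemma hitRate_eq_gloc_add {M N : ℕ} (lam : Fin M → ℝ) (C : Fin N → Set (ℝ × ℝ)) (j : Fin N)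
    (X : Fin M → Fin N → Bool) :
    hitRate lam (wvol C) X = gloc lam C j X + hitRateAwayFrom lam (wvol C) j X := by
  rw [hitRate_eq_sum_hns, ← sum_filter_add_sum_filter_not univ (fun s => j ∈ s),
    sum_hns_of_mem_eq_gloc, hitRateAwayFrom]

lemma exp_mul_add_div_sum {ι : Type*} (S : Finset ι) (f : ι → ℝ) (β a r : ℝ) :
    Real.exp (β * (a + r)) / ∑ v ∈ S, Real.exp (β * (f v + r)) =
      Real.exp (β * a) / ∑ v ∈ S, Real.exp (β * f v) := by
  simp only [mul_add, Real.exp_add, ← sum_mul]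
  exact mul_div_mul_right _ _ (Real.exp_ne_zero _)

theorem conditional_gibbs_locality_general (M N K : ℕ)
    (lam : Fin M → ℝ)
    (C : Fin N → Set (ℝ × ℝ))
    (β : ℝ) (j : Fin N) (A B : Fin M → Fin N → Bool)
    (hagree : ∀ (i : Fin M) (j' : Fin N), j' ≠ j → A i j' = B i j') :
    Real.exp (β * hitRate lam (wvol C) A) /
        (∑ v ∈ colSet M K, Real.exp (β * hitRate lam (wvol C) (updCol B j v))) =
      Real.exp (β * gloc lam C j A) /
        (∑ v ∈ colSet M K, Real.exp (β * gloc lam C j (updCol B j v))) := by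
  have hB : ∀ v, hitRate lam (wvol C) (updCol B j v) =
      gloc lam C j (updCol B j v) + hitRateAwayFrom lam (wvol C) j A := fun v => by
    rw [hitRate_eq_gloc_add lam C j, hitRateAwayFrom_congr lam (wvol C) j (Y := A)
      fun i j' hj' => by simp only [updCol, if_neg hj', hagree i j' hj']]
  simp only [hitRate_eq_gloc_add lam C j A, hB]
  exact exp_mul_add_div_sum _ _ β _ _

/-- locality of the conditional Gibbs distribution. -/
theorem conditional_gibbs_locality (M N K : ℕ) (hM : 1 ≤ M) (hN : 1 ≤ N)
    (hK : 1 ≤ K) (hKM : K < M)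
    (lam : Fin M → ℝ) (hlam : ∀ i, 0 ≤ lam i)
    (C : Fin N → Set (ℝ × ℝ)) (hCmeas : ∀ i, MeasurableSet (C i))
    (hCfin : ∀ i, volume (C i) < ⊤)
    (β : ℝ) (j : Fin N) (A B : Fin M → Fin N → Bool)
    (hA : A ∈ Config M N K) (hB : B ∈ Config M N K)
    (hagree : ∀ (i : Fin M) (j' : Fin N), j' ≠ j → A i j' = B i j') :
    Real.exp (β * hitRate lam (wvol C) A) /
        (∑ v ∈ colSet M K, Real.exp (β * hitRate lam (wvol C) (updCol B j v))) =
      Real.exp (β * gloc lam C j A) /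
        (∑ v ∈ colSet M K, Real.exp (β * gloc lam C j (updCol B j v))) :=
  conditional_gibbs_locality_general M N K lam C β j A B hagree
end
end

section
/- Uniform positivity of the N-step kernel: for every β ≥ 0 and all configurations x, y ∈ 𝓑, the N-fold matrix power of the random-scan Gibbs kernel satisfies P_β^N(x,y) ≥ ( exp(−β Δ) / (N · C(M,K)) )^N, where C(M,K) is the binomial coefficient 'M choose K'. -/
open Finset Filter

noncomputable section

/-- The random-scan Gibbs sampling kernel P_β(x,y). -/
def kernel (M N K : ℕ) (lam : Fin M → ℝ) (w : Finset (Fin N) → ℝ) (β : ℝ)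
    (x y : Fin M → Fin N → Bool) : ℝ :=
  (1 / (N : ℝ)) * ∑ j : Fin N,
    if ∀ (i : Fin M) (j' : Fin N), j' ≠ j → x i j' = y i j' then
      Real.exp (β * hitRate lam w y) /
        ∑ v ∈ colSet M K, Real.exp (β * hitRate lam w (updCol x j v))
    else 0

/-- The random-scan Gibbs kernel as a matrix indexed by the configuration space. -/
def kernelM (M N K : ℕ) (lam : Fin M → ℝ) (w : Finset (Fin N) → ℝ) (β : ℝ) :
    Matrix ↥(Config M N K) ↥(Config M N K) ℝ :=
  Matrix.of fun x y => kernel M N K lam w β x.1 y.1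

/-- max_{B∈𝓑} h(B). -/
def maxHit (M N K : ℕ) (lam : Fin M → ℝ) (w : Finset (Fin N) → ℝ) : ℝ :=
  sSup (hitRate lam w '' ↑(Config M N K))

/-- min_{B∈𝓑} h(B). -/
def minHit (M N K : ℕ) (lam : Fin M → ℝ) (w : Finset (Fin N) → ℝ) : ℝ :=
  sInf (hitRate lam w '' ↑(Config M N K))

/-- Δ = max_{B∈𝓑} h(B) − min_{B∈𝓑} h(B). -/
def Delta (M N K : ℕ) (lam : Fin M → ℝ) (w : Finset (Fin N) → ℝ) : ℝ :=
  maxHit M N K lam w - minHit M N K lam w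

/-!
Any configuration `y` is reached from `x` in exactly `N` steps by overwriting the columns
`0, 1, …, N - 1` of `x` one at a time by those of `y`; every intermediate matrix is again a
configuration. Each such step has probability at least `e^{-βΔ} / (N · C(M,K))`: the column is
chosen with probability `1/N`, the numerator `e^{β h}` of the Gibbs weight is at least
`e^{β min h}`, and the normaliser is a sum of `C(M,K)` terms, each at most `e^{β max h}`.
Multiplying the step bounds along this path bounds the `N`-step kernel from below.
-/

theorem Matrix.pow_le_pow_apply_of_path {R ι : Type*} [Semiring R] [PartialOrder R]
    [IsOrderedRing R] [Fintype ι] [DecidableEq ι] {A : Matrix ι ι R} (hA : ∀ i j, 0 ≤ A i j)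
    {c : R} (hc : 0 ≤ c) (z : ℕ → ι) (n : ℕ) (hz : ∀ t < n, c ≤ A (z t) (z (t + 1))) :
    c ^ n ≤ (A ^ n) (z 0) (z n) := by
  induction n with
  | zero => simp
  | succ n ih =>
    have hpath : c ^ n ≤ (A ^ n) (z 0) (z n) := ih fun t ht => hz t (by omega)
    rw [pow_succ, pow_succ, Matrix.mul_apply]
    calc c ^ n * c ≤ (A ^ n) (z 0) (z n) * A (z n) (z (n + 1)) :=
          mul_le_mul hpath (hz n n.lt_succ_self) hc (Matrix.pow_apply_nonneg hA n _ _)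
      _ ≤ ∑ k, (A ^ n) (z 0) k * A k (z (n + 1)) :=
          single_le_sum (f := fun k => (A ^ n) (z 0) k * A k (z (n + 1)))
            (fun k _ => mul_nonneg (Matrix.pow_apply_nonneg hA n _ _) (hA k _)) (mem_univ (z n))

section Configurations

variable {M N K : ℕ}

theorem mem_Config {B : Fin M → Fin N → Bool} :
    B ∈ Config M N K ↔ ∀ j, #{i | B i j = true} = K := by
  simp [Config]

theorem mem_colSet {v : Fin M → Bool} : v ∈ colSet M K ↔ #{i | v i = true} = K := by
  simp [colSet]

theorem card_colSet : #(colSet M K) = M.choose K := by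
  rw [show M.choose K = #(powersetCard K (univ : Finset (Fin M))) by simp]
  refine card_nbij' (fun v => ({i | v i = true} : Finset (Fin M))) (fun s i => decide (i ∈ s))
    ?_ ?_ ?_ ?_
  · intro v hv
    simpa [mem_powersetCard] using mem_colSet.mp hv
  · intro s hs
    simpa [mem_colSet] using (mem_powersetCard.mp hs).2
  · intro v _
    funext i
    simp
  · intro s _
    ext i
    simp

theorem col_mem_colSet {x : Fin M → Fin N → Bool} (hx : x ∈ Config M N K) (j : Fin N) :
    (fun i => x i j) ∈ colSet M K :=
  mem_colSet.mpr (mem_Config.mp hx j)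

theorem updCol_mem_Config {x : Fin M → Fin N → Bool} (hx : x ∈ Config M N K) (j : Fin N)
    {v : Fin M → Bool} (hv : v ∈ colSet M K) : updCol x j v ∈ Config M N K := by
  refine mem_Config.mpr fun j' => ?_
  by_cases h : j' = j
  · simpa [updCol, h] using mem_colSet.mp hv
  · simpa [updCol, h] using mem_Config.mp hx j'

theorem hitRate_le_maxHit {lam : Fin M → ℝ} {w : Finset (Fin N) → ℝ}
    {B : Fin M → Fin N → Bool} (hB : B ∈ Config M N K) :
    hitRate lam w B ≤ maxHit M N K lam w :=
  le_csSup ((Config M N K).finite_toSet.image _).bddAbove ⟨B, hB, rfl⟩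

theorem minHit_le_hitRate {lam : Fin M → ℝ} {w : Finset (Fin N) → ℝ}
    {B : Fin M → Fin N → Bool} (hB : B ∈ Config M N K) :
    minHit M N K lam w ≤ hitRate lam w B :=
  csInf_le ((Config M N K).finite_toSet.image _).bddBelow ⟨B, hB, rfl⟩

def spliceCols (x y : Fin M → Fin N → Bool) (t : ℕ) : Fin M → Fin N → Bool :=
  fun i j => if (j : ℕ) < t then y i j else x i j

variable {x y : Fin M → Fin N → Bool}

theorem spliceCols_mem_Config (hx : x ∈ Config M N K) (hy : y ∈ Config M N K) (t : ℕ) :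
    spliceCols x y t ∈ Config M N K := by
  refine mem_Config.mpr fun j => ?_
  by_cases h : (j : ℕ) < t
  · simpa [spliceCols, h] using mem_Config.mp hy j
  · simpa [spliceCols, h] using mem_Config.mp hx j

theorem spliceCols_zero : spliceCols x y 0 = x := by
  funext i j
  simp [spliceCols]

theorem spliceCols_of_le {t : ℕ} (ht : N ≤ t) : spliceCols x y t = y := by
  funext i j
  simp [spliceCols, j.isLt.trans_le ht]

theorem spliceCols_succ_apply_of_ne {t : ℕ} (ht : t < N) {j : Fin N} (hj : j ≠ ⟨t, ht⟩)
    (i : Fin M) : spliceCols x y t i j = spliceCols x y (t + 1) i j := by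
  have hjt : (j : ℕ) ≠ t := fun h => hj (Fin.ext h)
  by_cases h : (j : ℕ) < t
  · simp [spliceCols, h, h.trans t.lt_succ_self]
  · simp [spliceCols, h, show ¬ (j : ℕ) < t + 1 by omega]

end Configurations

section GibbsKernel

variable {M N K : ℕ} {lam : Fin M → ℝ} {w : Finset (Fin N) → ℝ} {β : ℝ}
  {x y : Fin M → Fin N → Bool}

theorem kernel_nonneg (x y : Fin M → Fin N → Bool) : 0 ≤ kernel M N K lam w β x y := by
  unfold kernel
  refine mul_nonneg (by positivity) (sum_nonneg fun j _ => ?_)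
  split_ifs <;> positivity

theorem sum_exp_hitRate_updCol_pos (hx : x ∈ Config M N K) (j : Fin N) :
    0 < ∑ v ∈ colSet M K, Real.exp (β * hitRate lam w (updCol x j v)) :=
  sum_pos (fun _ _ => Real.exp_pos _) ⟨_, col_mem_colSet hx j⟩

theorem sum_exp_hitRate_updCol_le (hβ : 0 ≤ β) (hx : x ∈ Config M N K) (j : Fin N) :
    ∑ v ∈ colSet M K, Real.exp (β * hitRate lam w (updCol x j v)) ≤
      M.choose K * Real.exp (β * maxHit M N K lam w) := by
  calc ∑ v ∈ colSet M K, Real.exp (β * hitRate lam w (updCol x j v))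
      ≤ ∑ _v ∈ colSet M K, Real.exp (β * maxHit M N K lam w) := by
        gcongr with v hv
        exact hitRate_le_maxHit (updCol_mem_Config hx j hv)
    _ = M.choose K * Real.exp (β * maxHit M N K lam w) := by
        rw [sum_const, card_colSet, nsmul_eq_mul]

theorem gibbs_div_le_kernel (j : Fin N) (hxy : ∀ i j', j' ≠ j → x i j' = y i j') :
    (1 / (N : ℝ)) * (Real.exp (β * hitRate lam w y) /
        ∑ v ∈ colSet M K, Real.exp (β * hitRate lam w (updCol x j v))) ≤
      kernel M N K lam w β x y := by
  unfold kernel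
  gcongr
  refine le_trans ?_ (single_le_sum (fun j' _ => ?_) (mem_univ j))
  · rw [if_pos hxy]
  · split_ifs <;> positivity

theorem le_kernel_of_eq_off_col (hβ : 0 ≤ β) (hx : x ∈ Config M N K) (hy : y ∈ Config M N K)
    (j : Fin N) (hxy : ∀ i j', j' ≠ j → x i j' = y i j') :
    Real.exp (-β * Delta M N K lam w) / ((N : ℝ) * (M.choose K : ℝ)) ≤
      kernel M N K lam w β x y := by
  have hnorm := sum_exp_hitRate_updCol_le (lam := lam) (w := w) hβ hx j
  calc Real.exp (-β * Delta M N K lam w) / ((N : ℝ) * (M.choose K : ℝ))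
      = (1 / (N : ℝ)) * (Real.exp (β * minHit M N K lam w) /
          (M.choose K * Real.exp (β * maxHit M N K lam w))) := by
        rw [Delta, show -β * (maxHit M N K lam w - minHit M N K lam w) =
          β * minHit M N K lam w - β * maxHit M N K lam w by ring, Real.exp_sub]
        field_simp
    _ ≤ (1 / (N : ℝ)) * (Real.exp (β * hitRate lam w y) /
          ∑ v ∈ colSet M K, Real.exp (β * hitRate lam w (updCol x j v))) := by
        gcongr
        · exact sum_exp_hitRate_updCol_pos hx j
        · exact minHit_le_hitRate hy
    _ ≤ kernel M N K lam w β x y := gibbs_div_le_kernel j hxy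

end GibbsKernel

theorem nstep_kernel_uniformly_positive_general (M N K : ℕ)
    (lam : Fin M → ℝ)
    (w : Finset (Fin N) → ℝ)
    (β : ℝ) (hβ : 0 ≤ β) (x y : ↥(Config M N K)) :
    (Real.exp (-β * Delta M N K lam w) / ((N : ℝ) * (M.choose K : ℝ))) ^ N ≤
      (kernelM M N K lam w β ^ N) x y := by
  let z : ℕ → ↥(Config M N K) := fun t =>
    ⟨spliceCols x y t, spliceCols_mem_Config x.2 y.2 t⟩
  have hz0 : z 0 = x := Subtype.ext (spliceCols_zero (y := y.1))
  have hzN : z N = y := Subtype.ext (spliceCols_of_le (x := x.1) le_rfl)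
  have hstep : ∀ t < N, Real.exp (-β * Delta M N K lam w) / ((N : ℝ) * (M.choose K : ℝ)) ≤
      kernelM M N K lam w β (z t) (z (t + 1)) := fun t ht =>
    le_kernel_of_eq_off_col hβ (z t).2 (z (t + 1)).2 ⟨t, ht⟩
      fun i _ hj => spliceCols_succ_apply_of_ne ht hj i
  simpa only [hz0, hzN] using Matrix.pow_le_pow_apply_of_path (A := kernelM M N K lam w β)
    (fun a b => kernel_nonneg a.1 b.1) (by positivity) z N hstep

/-- uniform positivity of the N-step kernel:
P_β^N(x,y) ≥ (exp(−βΔ)/(N·C(M,K)))^N for all configurations x, y. -/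
theorem nstep_kernel_uniformly_positive (M N K : ℕ) (hM : 1 ≤ M) (hN : 1 ≤ N)
    (hK : 1 ≤ K) (hKM : K < M)
    (lam : Fin M → ℝ) (hlam : ∀ i, 0 ≤ lam i)
    (w : Finset (Fin N) → ℝ) (hw : ∀ s, 0 ≤ w s)
    (β : ℝ) (hβ : 0 ≤ β) (x y : ↥(Config M N K)) :
    (Real.exp (-β * Delta M N K lam w) / ((N : ℝ) * (M.choose K : ℝ))) ^ N ≤
      (kernelM M N K lam w β ^ N) x y :=
  nstep_kernel_uniformly_positive_general M N K lam w β hβ x y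
end
end

section
/- Eventual monotone decay of the Gibbs probability of a non-maximizer: if B ∈ 𝓑 satisfies h(B) < max_{B'∈𝓑} h(B'), then there exists β₀ ∈ ℝ such that the map β ↦ π_β(B) is nonincreasing on [β₀, ∞), and lim_{β→∞} π_β(B) = 0. -/
open Finset Filter

noncomputable section

/-- The Gibbs distribution π_β(B) = exp(β h(B)) / Σ_{B'∈𝓑} exp(β h(B')). -/
def gibbs (M N K : ℕ) (lam : Fin M → ℝ) (w : Finset (Fin N) → ℝ) (β : ℝ)
    (B : Fin M → Fin N → Bool) : ℝ :=
  Real.exp (β * hitRate lam w B) / ∑ B' ∈ Config M N K, Real.exp (β * hitRate lam w B')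

/-!
Dividing by `exp (β * h B)` gives `π_β(B) = 1 / g β` with `g β = ∑ B', exp (β * (h B' - h B))`.
As a sum of exponentials of linear functions `g` is convex, and the summand of a configuration
with larger hit rate drives it to `+∞`. A convex function that has increased once is monotone
from that point on, so `1 / g` is eventually nonincreasing and tends to `0`.
-/

theorem ConvexOn.monotoneOn_inter_Ici {𝕜 : Type*} [Field 𝕜] [LinearOrder 𝕜] [IsStrictOrderedRing 𝕜]
    {s : Set 𝕜} {f : 𝕜 → 𝕜} (hf : ConvexOn 𝕜 s f) {a b : 𝕜} (ha : a ∈ s) (hb : b ∈ s)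
    (hab : a < b) (hfab : f a ≤ f b) : MonotoneOn f (s ∩ Set.Ici b) := by
  rintro x ⟨hxs, hbx⟩ y ⟨hys, -⟩ hxy
  rcases hxy.eq_or_lt with rfl | hxy
  · rfl
  have hax : a < x := hab.trans_le hbx
  have hslope : 0 ≤ (f y - f x) / (y - x) :=
    calc 0 ≤ (f b - f a) / (b - a) := div_nonneg (sub_nonneg.2 hfab) (sub_pos.2 hab).le
      _ ≤ (f x - f a) / (x - a) := hf.secant_mono ha hb hxs hab.ne' hax.ne' hbx
      _ ≤ (f y - f x) / (y - x) := hf.slope_mono_adjacent ha hys hax hxy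
  exact (slope_nonneg_iff_of_le hxy.le).1 (by rwa [slope_def_field])

section SumExp

open Real

variable {ι : Type*} (s : Finset ι)

theorem convexOn_sum_exp_mul (c : ι → ℝ) :
    ConvexOn ℝ Set.univ fun β : ℝ => ∑ i ∈ s, exp (β * c i) := by
  classical
  induction s using Finset.induction_on with
  | empty => simpa using convexOn_const (0 : ℝ) convex_univ
  | insert j s hj ih =>
    simp only [sum_insert hj]
    exact (convexOn_exp.comp_linearMap (LinearMap.id.smulRight (c j))).add ih

theorem tendsto_sum_exp_mul_atTop {c : ι → ℝ} {j : ι} (hj : j ∈ s) (hc : 0 < c j) :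
    Tendsto (fun β : ℝ => ∑ i ∈ s, exp (β * c i)) atTop atTop :=
  tendsto_atTop_mono (fun β => single_le_sum (fun i _ => (exp_pos (β * c i)).le) hj)
    (tendsto_exp_atTop.comp (tendsto_id.atTop_mul_const hc))

theorem exp_mul_div_sum_exp_mul (f : ι → ℝ) (a β : ℝ) :
    exp (β * a) / ∑ i ∈ s, exp (β * f i) = (∑ i ∈ s, exp (β * (f i - a)))⁻¹ := by
  simp only [mul_sub, exp_sub, ← sum_div, inv_div]

theorem eventually_antitoneOn_and_tendsto_zero_exp_mul_div_sum_exp_mul {f : ι → ℝ} {a : ℝ}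
    {j : ι} (hj : j ∈ s) (ha : a < f j) :
    (∃ β₀ : ℝ, AntitoneOn (fun β : ℝ => exp (β * a) / ∑ i ∈ s, exp (β * f i)) (Set.Ici β₀)) ∧
      Tendsto (fun β : ℝ => exp (β * a) / ∑ i ∈ s, exp (β * f i)) atTop (nhds 0) := by
  simp only [exp_mul_div_sum_exp_mul]
  set g := fun β : ℝ => ∑ i ∈ s, exp (β * (f i - a))
  have hg_top : Tendsto g atTop atTop := tendsto_sum_exp_mul_atTop s hj (sub_pos.2 ha)
  have hg_pos (β : ℝ) : 0 < g β := sum_pos (fun i _ => exp_pos _) ⟨j, hj⟩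
  obtain ⟨b, hb, hgb⟩ : ∃ b, 0 < b ∧ g 0 ≤ g b :=
    ((eventually_gt_atTop 0).and (hg_top.eventually_ge_atTop (g 0))).exists
  have hg_mono := (convexOn_sum_exp_mul s _).monotoneOn_inter_Ici trivial trivial hb hgb
  exact ⟨⟨b, fun x hx y hy hxy => inv_anti₀ (hg_pos x) (hg_mono ⟨trivial, hx⟩ ⟨trivial, hy⟩ hxy)⟩,
    hg_top.inv_tendsto_atTop⟩

end SumExp

theorem gibbs_prob_of_nonmaximizer_eventually_decreasing_general (M N K : ℕ)
    (lam : Fin M → ℝ)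
    (w : Finset (Fin N) → ℝ)
    (B : Fin M → Fin N → Bool) (hB : B ∈ Config M N K)
    (hlt : hitRate lam w B < maxHit M N K lam w) :
    (∃ β₀ : ℝ, AntitoneOn (fun β : ℝ => gibbs M N K lam w β B) (Set.Ici β₀)) ∧
      Tendsto (fun β : ℝ => gibbs M N K lam w β B) atTop (nhds 0) := by
  obtain ⟨_, ⟨B', hB', rfl⟩, hlt'⟩ := exists_lt_of_lt_csSup ⟨_, Set.mem_image_of_mem _ hB⟩ hlt
  exact eventually_antitoneOn_and_tendsto_zero_exp_mul_div_sum_exp_mul _ hB' hlt'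

/-- if h(B) < max h then π_β(B) is eventually nonincreasing in β,
and π_β(B) → 0 as β → ∞. -/
theorem gibbs_prob_of_nonmaximizer_eventually_decreasing (M N K : ℕ)
    (hM : 1 ≤ M) (hN : 1 ≤ N) (hK : 1 ≤ K) (hKM : K < M)
    (lam : Fin M → ℝ) (hlam : ∀ i, 0 ≤ lam i)
    (w : Finset (Fin N) → ℝ) (hw : ∀ s, 0 ≤ w s)
    (B : Fin M → Fin N → Bool) (hB : B ∈ Config M N K)
    (hlt : hitRate lam w B < maxHit M N K lam w) :
    (∃ β₀ : ℝ, AntitoneOn (fun β : ℝ => gibbs M N K lam w β B) (Set.Ici β₀)) ∧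
      Tendsto (fun β : ℝ => gibbs M N K lam w β B) atTop (nhds 0) :=
  gibbs_prob_of_nonmaximizer_eventually_decreasing_general M N K lam w B hB hlt
end
end

section
/- Summable variation of the Gibbs distributions along any cooling schedule: for every nondecreasing sequence of inverse temperatures (β_T)_{T≥0} with β_T → ∞, one has Σ_{T=0}^∞ Σ_{B∈𝓑} |π_{β_{T+1}}(B) − π_{β_T}(B)| < ∞. -/
open Finset Filter

noncomputable section

/-! For a configuration `B`, `π_β(B) = (∑_{B'} exp (β (h B' - h B)))⁻¹` is the inverse of a
finite sum of exponentials in `β`, and such a sum is monotone or antitone on some half-line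
`[c, ∞)`. As `β_T` increases to `∞`, the bounded sequence `T ↦ π_{β_T}(B)` is therefore eventually
monotone or antitone, so its increments are absolutely summable (they telescope). Summing over
the finitely many `B` concludes. -/

open Real

lemma le_mul_exp_mul {a β : ℝ} (hβ : 0 ≤ β) : a ≤ a * exp (β * a) := by
  rcases le_total 0 a with ha | ha
  · exact le_mul_of_one_le_right ha (one_le_exp (mul_nonneg hβ ha))
  · simpa using mul_le_mul_of_nonpos_left
      (exp_le_one_iff.mpr (mul_nonpos_of_nonneg_of_nonpos hβ ha)) ha

section ExpSum

variable {ι : Type*} (s : Finset ι) (a : ι → ℝ)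

lemma hasDerivAt_sum_exp_mul (β : ℝ) :
    HasDerivAt (fun β => ∑ x ∈ s, exp (β * a x)) (∑ x ∈ s, a x * exp (β * a x)) β := by
  refine HasDerivAt.fun_sum fun x _ => ?_
  simpa [mul_comm] using ((hasDerivAt_id β).mul_const (a x)).exp

lemma tendsto_sum_mul_exp_mul_atTop {x₀ : ι} (hx₀ : x₀ ∈ s) (ha₀ : 0 < a x₀) :
    Tendsto (fun β => ∑ x ∈ s, a x * exp (β * a x)) atTop atTop := by
  classical
  have hdom : Tendsto (fun β => a x₀ * exp (β * a x₀) + ∑ x ∈ s.erase x₀, a x) atTop atTop :=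
    tendsto_atTop_add_const_right _ _ <|
      (tendsto_exp_atTop.comp (tendsto_id.atTop_mul_const ha₀)).const_mul_atTop ha₀
  refine tendsto_atTop_mono' _ ?_ hdom
  filter_upwards [eventually_ge_atTop 0] with β hβ
  rw [← add_sum_erase s _ hx₀]
  exact add_le_add le_rfl (sum_le_sum fun x _ => le_mul_exp_mul hβ)

/-- The sum is antitone if all `aₓ ≤ 0`; otherwise its derivative `∑ aₓ exp (β aₓ)` tends to `∞`. -/
lemma exists_monotoneOn_or_antitoneOn_sum_exp_mul :
    ∃ c, MonotoneOn (fun β => ∑ x ∈ s, exp (β * a x)) (Set.Ici c) ∨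
      AntitoneOn (fun β => ∑ x ∈ s, exp (β * a x)) (Set.Ici c) := by
  by_cases hnonpos : ∀ x ∈ s, a x ≤ 0
  · refine ⟨0, Or.inr fun β _ γ _ hβγ => sum_le_sum fun x hx => ?_⟩
    exact exp_le_exp.mpr (mul_le_mul_of_nonpos_right hβγ (hnonpos x hx))
  push Not at hnonpos
  obtain ⟨x₀, hx₀, ha₀⟩ := hnonpos
  obtain ⟨c, hc⟩ := eventually_atTop.mp
    ((tendsto_sum_mul_exp_mul_atTop s a hx₀ ha₀).eventually_ge_atTop 0)
  refine ⟨c, Or.inl (monotoneOn_of_hasDerivWithinAt_nonneg (convex_Ici c)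
    (fun β _ => (hasDerivAt_sum_exp_mul s a β).continuousAt.continuousWithinAt)
    (fun β _ => (hasDerivAt_sum_exp_mul s a β).hasDerivWithinAt) fun β hβ => hc β ?_)⟩
  rw [interior_Ici] at hβ
  exact le_of_lt hβ

end ExpSum

section Softmax

variable {ι : Type*} (C : Finset ι) (H : ι → ℝ) (β : ℝ) {b : ι}

lemma exp_div_sum_exp_eq_inv_sum_exp_sub :
    exp (β * H b) / ∑ x ∈ C, exp (β * H x) = (∑ x ∈ C, exp (β * (H x - H b)))⁻¹ := by
  rw [← inv_div, sum_div]
  congr 1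
  refine sum_congr rfl fun x _ => ?_
  rw [← exp_sub, mul_sub]

lemma one_le_sum_exp_sub (hb : b ∈ C) : 1 ≤ ∑ x ∈ C, exp (β * (H x - H b)) := by
  calc (1 : ℝ) = exp (β * (H b - H b)) := by simp
    _ ≤ ∑ x ∈ C, exp (β * (H x - H b)) :=
      single_le_sum (f := fun x => exp (β * (H x - H b))) (fun _ _ => (exp_pos _).le) hb

lemma abs_exp_div_sum_exp_le_one (hb : b ∈ C) :
    |exp (β * H b) / ∑ x ∈ C, exp (β * H x)| ≤ 1 := by
  rw [exp_div_sum_exp_eq_inv_sum_exp_sub, abs_inv]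
  exact inv_le_one_of_one_le₀ ((one_le_sum_exp_sub C H β hb).trans (le_abs_self _))

lemma exists_monotoneOn_or_antitoneOn_exp_div_sum_exp (hb : b ∈ C) :
    ∃ c, MonotoneOn (fun β => exp (β * H b) / ∑ x ∈ C, exp (β * H x)) (Set.Ici c) ∨
      AntitoneOn (fun β => exp (β * H b) / ∑ x ∈ C, exp (β * H x)) (Set.Ici c) := by
  simp only [exp_div_sum_exp_eq_inv_sum_exp_sub]
  obtain ⟨c, hc | hc⟩ := exists_monotoneOn_or_antitoneOn_sum_exp_mul C (fun x => H x - H b)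
  · refine ⟨c, Or.inr fun β hβ γ hγ hβγ => ?_⟩
    exact inv_anti₀ (one_pos.trans_le (one_le_sum_exp_sub C H β hb)) (hc hβ hγ hβγ)
  · refine ⟨c, Or.inl fun β hβ γ hγ hβγ => ?_⟩
    exact inv_anti₀ (one_pos.trans_le (one_le_sum_exp_sub C H γ hb)) (hc hβ hγ hβγ)

end Softmax

section Variation

lemma Monotone.summable_abs_sub {u : ℕ → ℝ} (hu : Monotone u) {b : ℝ} (hb : ∀ n, u n ≤ b) :
    Summable fun n => |u (n + 1) - u n| := by
  refine summable_of_sum_range_le (c := b - u 0) (fun n => abs_nonneg _) fun n => ?_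
  rw [sum_congr rfl fun k _ => abs_of_nonneg (sub_nonneg.mpr (hu k.le_succ)), sum_range_sub]
  linarith [hb n]

lemma Antitone.summable_abs_sub {u : ℕ → ℝ} (hu : Antitone u) {b : ℝ} (hb : ∀ n, b ≤ u n) :
    Summable fun n => |u (n + 1) - u n| := by
  simpa [abs_sub_comm, neg_add_eq_sub] using hu.neg.summable_abs_sub (b := -b) (by simpa using hb)

lemma summable_abs_sub_comp_of_monotoneOn_or_antitoneOn {f : ℝ → ℝ} {c b : ℝ}
    (hf : MonotoneOn f (Set.Ici c) ∨ AntitoneOn f (Set.Ici c)) (hb : ∀ β, |f β| ≤ b)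
    {βs : ℕ → ℝ} (hmono : Monotone βs) (hlim : Tendsto βs atTop atTop) :
    Summable fun T => |f (βs (T + 1)) - f (βs T)| := by
  obtain ⟨T₀, hT₀⟩ := eventually_atTop.mp (hlim.eventually_ge_atTop c)
  have hmem : ∀ n, βs (n + T₀) ∈ Set.Ici c := fun n => hT₀ _ (Nat.le_add_left _ _)
  have hshift : Monotone fun n => βs (n + T₀) := fun m n hmn => hmono (by omega)
  rw [← summable_nat_add_iff T₀]
  rcases hf with hf | hf
  · have hu : Monotone fun n => f (βs (n + T₀)) :=
      fun m n hmn => hf (hmem m) (hmem n) (hshift hmn)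
    simpa only [Nat.add_right_comm _ 1 T₀] using
      hu.summable_abs_sub fun n => (le_abs_self _).trans (hb _)
  · have hu : Antitone fun n => f (βs (n + T₀)) :=
      fun m n hmn => hf (hmem m) (hmem n) (hshift hmn)
    simpa only [Nat.add_right_comm _ 1 T₀] using
      hu.summable_abs_sub fun n => neg_le_of_abs_le (hb _)

end Variation

theorem gibbs_variation_summable_general (M N K : ℕ)
    (lam : Fin M → ℝ)
    (w : Finset (Fin N) → ℝ)
    (βs : ℕ → ℝ) (hmono : Monotone βs) (hlim : Tendsto βs atTop atTop) :
    Summable (fun T : ℕ => ∑ B ∈ Config M N K,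
      |gibbs M N K lam w (βs (T + 1)) B - gibbs M N K lam w (βs T) B|) := by
  refine summable_sum fun B hB => ?_
  obtain ⟨c, hc⟩ :=
    exists_monotoneOn_or_antitoneOn_exp_div_sum_exp (Config M N K) (hitRate lam w) hB
  exact summable_abs_sub_comp_of_monotoneOn_or_antitoneOn hc
    (fun β => abs_exp_div_sum_exp_le_one _ _ β hB) hmono hlim

/-- summable variation of the Gibbs distributions along any
nondecreasing cooling schedule β_T → ∞:
Σ_T Σ_{B∈𝓑} |π_{β_{T+1}}(B) − π_{β_T}(B)| < ∞. -/
theorem gibbs_variation_summable (M N K : ℕ) (hM : 1 ≤ M) (hN : 1 ≤ N)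
    (hK : 1 ≤ K) (hKM : K < M)
    (lam : Fin M → ℝ) (hlam : ∀ i, 0 ≤ lam i)
    (w : Finset (Fin N) → ℝ) (hw : ∀ s, 0 ≤ w s)
    (βs : ℕ → ℝ) (hmono : Monotone βs) (hlim : Tendsto βs atTop atTop) :
    Summable (fun T : ℕ => ∑ B ∈ Config M N K,
      |gibbs M N K lam w (βs (T + 1)) B - gibbs M N K lam w (βs T) B|) :=
  gibbs_variation_summable_general M N K lam w βs hmono hlim
end
end

section
/- Monotonicity of the mean hit rate under the Gibbs distribution: the map β ↦ Σ_{B∈𝓑} π_β(B) · h(B) is nondecreasing on ℝ. -/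
/-!
Under the Gibbs weights `exp (β h)` the mean of `h` has derivative the variance of `h`, so it is
nondecreasing in `β`. Without differentiating: for `β₁ ≤ β₂` the Gibbs weights at `β₂` are those at
`β₁` reweighted by `exp ((β₂ - β₁) h)`, a function that varies together with `h`, and the weighted
Chebyshev sum inequality says that such a reweighting can only increase the mean of `h`.
-/

open Finset Filter

noncomputable section

section Chebyshev

variable {ι α : Type*} [CommRing α] [LinearOrder α] [IsStrictOrderedRing α]

lemma Finset.sum_sum_nonneg_of_add_swap_nonneg (s : Finset ι) (T : ι → ι → α)
    (hT : ∀ i ∈ s, ∀ j ∈ s, 0 ≤ T i j + T j i) : 0 ≤ ∑ i ∈ s, ∑ j ∈ s, T i j := by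
  have hsymm : 2 * ∑ i ∈ s, ∑ j ∈ s, T i j = ∑ i ∈ s, ∑ j ∈ s, (T i j + T j i) := by
    simp only [sum_add_distrib]
    rw [sum_comm (f := fun i j => T j i)]
    ring
  have : 0 ≤ 2 * ∑ i ∈ s, ∑ j ∈ s, T i j :=
    hsymm ▸ sum_nonneg fun i hi => sum_nonneg fun j hj => hT i hi j hj
  linarith

theorem Monovary.sum_mul_sum_le_sum_mul_sum_of_nonneg {f g p : ι → α} (hfg : Monovary f g)
    (s : Finset ι) (hp : ∀ i ∈ s, 0 ≤ p i) :
    (∑ i ∈ s, p i * f i) * (∑ i ∈ s, p i * g i) ≤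
      (∑ i ∈ s, p i) * ∑ i ∈ s, p i * (f i * g i) := by
  rw [← sub_nonneg, sum_mul_sum, sum_mul_sum, ← sum_sub_distrib]
  simp only [← sum_sub_distrib]
  -- `p i * p j * (f i * g i - f i * g j)` symmetrizes to `p i * p j * (f i - f j) * (g i - g j)`
  refine sum_sum_nonneg_of_add_swap_nonneg s _ fun i hi j hj => ?_
  have := mul_nonneg (mul_nonneg (hp i hi) (hp j hj)) (monovary_iff_forall_mul_nonneg.1 hfg i j)
  linear_combination this

end Chebyshev

open Real in
theorem monotone_sum_exp_mul_mul_div_sum_exp {ι : Type*} (s : Finset ι) (h : ι → ℝ) :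
    Monotone fun β : ℝ => (∑ i ∈ s, exp (β * h i) * h i) / ∑ i ∈ s, exp (β * h i) := by
  intro β₁ β₂ hβ
  rcases s.eq_empty_or_nonempty with rfl | hs
  · simp
  have hZ (β : ℝ) : 0 < ∑ i ∈ s, exp (β * h i) := sum_pos (fun i _ => exp_pos _) hs
  have hreweight (i : ι) : exp (β₂ * h i) = exp (β₁ * h i) * exp ((β₂ - β₁) * h i) := by
    rw [← exp_add]; ring_nf
  have hmonovary : Monovary h fun i => exp ((β₂ - β₁) * h i) :=
    ((monovary_self h).comp_monotone_left fun x y hxy =>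
      exp_le_exp.2 (mul_le_mul_of_nonneg_left hxy (sub_nonneg.2 hβ))).symm
  have hchebyshev :=
    hmonovary.sum_mul_sum_le_sum_mul_sum_of_nonneg s fun i _ => (exp_pos (β₁ * h i)).le
  rw [div_le_div_iff₀ (hZ β₁) (hZ β₂), mul_comm _ (∑ i ∈ s, exp (β₁ * h i))]
  simp only [hreweight]
  exact hchebyshev.trans_eq (congrArg _ (sum_congr rfl fun i _ => by ring))

theorem gibbs_mean_hit_rate_monotone_general (M N K : ℕ)
    (lam : Fin M → ℝ)
    (w : Finset (Fin N) → ℝ) :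
    Monotone (fun β : ℝ => ∑ B ∈ Config M N K,
      gibbs M N K lam w β B * hitRate lam w B) := by
  simpa only [gibbs, div_mul_eq_mul_div, ← sum_div] using
    monotone_sum_exp_mul_mul_div_sum_exp (Config M N K) (hitRate lam w)

/-- the mean hit rate under the Gibbs distribution,
β ↦ Σ_{B∈𝓑} π_β(B) h(B), is nondecreasing on ℝ. -/
theorem gibbs_mean_hit_rate_monotone (M N K : ℕ) (hM : 1 ≤ M) (hN : 1 ≤ N)
    (hK : 1 ≤ K) (hKM : K < M)
    (lam : Fin M → ℝ) (hlam : ∀ i, 0 ≤ lam i)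
    (w : Finset (Fin N) → ℝ) (hw : ∀ s, 0 ≤ w s) :
    Monotone (fun β : ℝ => ∑ B ∈ Config M N K,
      gibbs M N K lam w β B * hitRate lam w B) :=
  gibbs_mean_hit_rate_monotone_general M N K lam w
end
end
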